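/- (The diminishing ratios of V_N in N) Let N ≥ 1 be an integer and x ∈ X₀, and assume the N-QP at x attains its infimum. Then V_{N+1}(x) − V_N(x) ≤ α_N·V_N(x), i.e., V_{N+1}(x) ≤ (1 + α_N)·V_N(x). -/

import Mathlib

open Matrix Finset Filter Topology

/-- The smallest eigenvalue of a (symmetric) real matrix. -/
noncomputable def lamMin {n : ℕ} (R : Matrix (Fin n) (Fin n) ℝ) : ℝ :=
  if h : R.IsHermitian then ⨅ i, h.eigenvalues i else 0

/-- The largest eigenvalue of a (symmetric) real matrix. -/
noncomputable def lamMax {n : ℕ} (R : Matrix (Fin n) (Fin n) ℝ) : ℝ :=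
  if h : R.IsHermitian then ⨆ i, h.eigenvalues i else 0

/-- The quadratic form `xᵀ R x`. -/
noncomputable def qf {p : ℕ} (R : Matrix (Fin p) (Fin p) ℝ) (x : Fin p → ℝ) : ℝ :=
  x ⬝ᵥ R.mulVec x

/-- λ := 1 − λ_min(Q̄)/λ_max(P̄). -/
noncomputable def lamParam {n : ℕ} (Qb Pb : Matrix (Fin n) (Fin n) ℝ) : ℝ :=
  1 - lamMin Qb / lamMax Pb

/-- φ_N := (λ_max(P̄)·λ_max(P + KᵀQK)/λ_min(P̄))·(1 − λ^{N+1})/(1 − λ). -/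
noncomputable def phi {n m : ℕ} (Qb Pb P : Matrix (Fin n) (Fin n) ℝ)
    (Q : Matrix (Fin m) (Fin m) ℝ) (K : Matrix (Fin m) (Fin n) ℝ) (N : ℕ) : ℝ :=
  (lamMax Pb * lamMax (P + Kᵀ * Q * K) / lamMin Pb) *
    ((1 - lamParam Qb Pb ^ (N + 1)) / (1 - lamParam Qb Pb))

/-- φ_∞ := λ_max(P̄)·λ_max(P + KᵀQK)/(λ_min(P̄)·(1 − λ)). -/
noncomputable def phiInf {n m : ℕ} (Qb Pb P : Matrix (Fin n) (Fin n) ℝ)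
    (Q : Matrix (Fin m) (Fin m) ℝ) (K : Matrix (Fin m) (Fin n) ℝ) : ℝ :=
  lamMax Pb * lamMax (P + Kᵀ * Q * K) / (lamMin Pb * (1 - lamParam Qb Pb))

/-- ψ := λ_max(KᵀQK + ĀᵀPĀ)/λ_min(P). -/
noncomputable def psiC {n m : ℕ} (P Abar : Matrix (Fin n) (Fin n) ℝ)
    (Q : Matrix (Fin m) (Fin m) ℝ) (K : Matrix (Fin m) (Fin n) ℝ) : ℝ :=
  lamMax (Kᵀ * Q * K + Abarᵀ * P * Abar) / lamMin P

/-- χ := 1 − λ_min(P)/φ_∞. -/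
noncomputable def chiC {n m : ℕ} (Qb Pb P : Matrix (Fin n) (Fin n) ℝ)
    (Q : Matrix (Fin m) (Fin m) ℝ) (K : Matrix (Fin m) (Fin n) ℝ) : ℝ :=
  1 - lamMin P / phiInf Qb Pb P Q K

/-- α_N := (λ_max(KᵀQK + ĀᵀPĀ)/λ_min(P))·∏_{κ=0}^{N−1}(1 − λ_min(P)/φ_{κ+1}). -/
noncomputable def alphaC {n m : ℕ} (Qb Pb P Abar : Matrix (Fin n) (Fin n) ℝ)
    (Q : Matrix (Fin m) (Fin m) ℝ) (K : Matrix (Fin m) (Fin n) ℝ) (N : ℕ) : ℝ :=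
  psiC P Abar Q K * ∏ κ ∈ Finset.range N, (1 - lamMin P / phi Qb Pb P Q K (κ + 1))

/-- γ_{N,S} := (1 − λ_min(P)/φ_∞)·max{1 + α_{N−S−1}, (1 + α_{N−1})·∏_{ℓ=N−S}^{N−1}(1 + α_ℓ)}. -/
noncomputable def gammaNS {n m : ℕ} (Qb Pb P Abar : Matrix (Fin n) (Fin n) ℝ)
    (Q : Matrix (Fin m) (Fin m) ℝ) (K : Matrix (Fin m) (Fin n) ℝ) (N S : ℕ) : ℝ :=
  (1 - lamMin P / phiInf Qb Pb P Q K) *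
    max (1 + alphaC Qb Pb P Abar Q K (N - S - 1))
      ((1 + alphaC Qb Pb P Abar Q K (N - 1)) *
        ∏ ℓ ∈ Finset.Ico (N - S) N, (1 + alphaC Qb Pb P Abar Q K ℓ))

/-- The trajectory of `x(τ+1) = A x(τ) + B u(τ)` from `x0` under the control sequence `u`. -/
def traj {n m : ℕ} (A : Matrix (Fin n) (Fin n) ℝ) (B : Matrix (Fin n) (Fin m) ℝ)
    (x0 : Fin n → ℝ) (u : ℕ → Fin m → ℝ) : ℕ → Fin n → ℝ
  | 0 => x0
  | τ + 1 => A *ᵥ traj A B x0 u τ + B *ᵥ u τ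

/-- Feasibility of a control sequence `u(0),…,u(N−1)` for the `N`-QP at `x`. -/
def Feasible {n m : ℕ} (A : Matrix (Fin n) (Fin n) ℝ) (B : Matrix (Fin n) (Fin m) ℝ)
    (X0 : Set (Fin n → ℝ)) (U : Set (Fin m → ℝ)) (N : ℕ) (x : Fin n → ℝ)
    (u : ℕ → Fin m → ℝ) : Prop :=
  (∀ τ < N, u τ ∈ U) ∧ (∀ τ < N, traj A B x u (τ + 1) ∈ X0)

/-- The cost `Σ_{τ=0}^{N−1}(x(τ)ᵀPx(τ) + u(τ)ᵀQu(τ)) + x(N)ᵀPx(N)` of the `N`-QP. -/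
noncomputable def cost {n m : ℕ} (A : Matrix (Fin n) (Fin n) ℝ) (B : Matrix (Fin n) (Fin m) ℝ)
    (P : Matrix (Fin n) (Fin n) ℝ) (Q : Matrix (Fin m) (Fin m) ℝ) (N : ℕ)
    (x : Fin n → ℝ) (u : ℕ → Fin m → ℝ) : ℝ :=
  (∑ τ ∈ Finset.range N, (qf P (traj A B x u τ) + qf Q (u τ))) + qf P (traj A B x u N)

/-- `V_N(x)`: the optimal value of the `N`-QP at `x`. -/
noncomputable def Vopt {n m : ℕ} (A : Matrix (Fin n) (Fin n) ℝ) (B : Matrix (Fin n) (Fin m) ℝ)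
    (P : Matrix (Fin n) (Fin n) ℝ) (Q : Matrix (Fin m) (Fin m) ℝ)
    (X0 : Set (Fin n → ℝ)) (U : Set (Fin m → ℝ)) (N : ℕ) (x : Fin n → ℝ) : ℝ :=
  sInf (cost A B P Q N x '' {u | Feasible A B X0 U N x u})


/-!
Along an optimal trajectory `x*` from `x`, every tail of the optimal control is optimal
(Bellman's principle). Running the feedback `u = K x` from any `y ∈ X₀` stays in `X₀` and costs at
most `φ_k |y|²`, because `W` decays geometrically with rate `λ` along `Ā`; hence `V_k(y) ≤ φ_k |y|²`.
Since the first stage cost is at least `λ_min(P) |x|²`, one optimal step shrinks the value by the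
factor `1 - λ_min(P)/φ_{k+1}`, and iterating gives
`x*(N)ᵀ P x*(N) ≤ ∏_{κ<N} (1 - λ_min(P)/φ_{κ+1}) · V_N(x)`.
Appending the feedback step `u(N) = K x*(N)` yields a feasible control for the `(N+1)`-QP whose
extra cost `x*(N)ᵀ (KᵀQK + ĀᵀPĀ) x*(N)` is at most `ψ · x*(N)ᵀ P x*(N) ≤ α_N V_N(x)`.
-/

section QuadraticForm
variable {p q : ℕ}

theorem qf_add (R S : Matrix (Fin p) (Fin p) ℝ) (x : Fin p → ℝ) :
    qf (R + S) x = qf R x + qf S x := by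
  rw [qf, qf, qf, add_mulVec, dotProduct_add]

theorem qf_sub (R S : Matrix (Fin p) (Fin p) ℝ) (x : Fin p → ℝ) :
    qf (R - S) x = qf R x - qf S x := by
  rw [qf, qf, qf, sub_mulVec, dotProduct_sub]

theorem qf_transpose_mul_mul (R : Matrix (Fin p) (Fin p) ℝ) (M : Matrix (Fin p) (Fin q) ℝ)
    (x : Fin q → ℝ) : qf (Mᵀ * R * M) x = qf R (M *ᵥ x) := by
  rw [qf, qf, ← mulVec_mulVec, ← mulVec_mulVec, dotProduct_mulVec, vecMul_transpose]

theorem qf_nonneg {R : Matrix (Fin p) (Fin p) ℝ} (hR : R.PosSemidef) (x : Fin p → ℝ) :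
    0 ≤ qf R x := by
  simpa [qf] using hR.dotProduct_mulVec_nonneg x

theorem Matrix.PosSemidef.transpose_mul_mul {R : Matrix (Fin p) (Fin p) ℝ} (hR : R.PosSemidef)
    (M : Matrix (Fin p) (Fin q) ℝ) : (Mᵀ * R * M).PosSemidef := by
  simpa [conjTranspose_eq_transpose_of_trivial] using hR.conjTranspose_mul_mul_same M

theorem Matrix.IsHermitian.exists_qf_eq_sum_eigenvalues {R : Matrix (Fin p) (Fin p) ℝ}
    (h : R.IsHermitian) (x : Fin p → ℝ) :
    ∃ y : Fin p → ℝ, qf R x = ∑ i, h.eigenvalues i * y i ^ 2 ∧ ∑ i, y i ^ 2 = x ⬝ᵥ x := by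
  set V : Matrix (Fin p) (Fin p) ℝ := (h.eigenvectorUnitary : Matrix (Fin p) (Fin p) ℝ)
  have hV : V * Vᵀ = 1 := by
    simpa [V, star_eq_conjTranspose, conjTranspose_eq_transpose_of_trivial] using
      Matrix.mem_unitaryGroup_iff.mp h.eigenvectorUnitary.2
  refine ⟨Vᵀ *ᵥ x, ?_, ?_⟩
  · conv_lhs => rw [qf, h.spectral_theorem]
    simp only [Unitary.conjStarAlgAut_apply, star_eq_conjTranspose,
      conjTranspose_eq_transpose_of_trivial]
    rw [← mulVec_mulVec, ← mulVec_mulVec, dotProduct_mulVec, ← mulVec_transpose]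
    simp only [dotProduct, mulVec_diagonal]
    exact Finset.sum_congr rfl fun i _ => by simp [V]; ring
  · calc ∑ i, (Vᵀ *ᵥ x) i ^ 2 = (Vᵀ *ᵥ x) ⬝ᵥ (Vᵀ *ᵥ x) := by simp only [dotProduct, sq]
      _ = x ⬝ᵥ x := by rw [dotProduct_mulVec, vecMul_transpose, mulVec_mulVec, hV, one_mulVec]

end QuadraticForm

section Rayleigh
variable {p : ℕ} {R S : Matrix (Fin p) (Fin p) ℝ}

theorem lamMin_mul_dotProduct_le_qf (hR : R.IsHermitian) (x : Fin p → ℝ) :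
    lamMin R * (x ⬝ᵥ x) ≤ qf R x := by
  obtain ⟨y, hqf, hy⟩ := hR.exists_qf_eq_sum_eigenvalues x
  rw [hqf, ← hy, lamMin, dif_pos hR, Finset.mul_sum]
  exact Finset.sum_le_sum fun i _ => mul_le_mul_of_nonneg_right
    (ciInf_le (Set.finite_range _).bddBelow i) (sq_nonneg _)

theorem qf_le_lamMax_mul_dotProduct (hR : R.IsHermitian) (x : Fin p → ℝ) :
    qf R x ≤ lamMax R * (x ⬝ᵥ x) := by
  obtain ⟨y, hqf, hy⟩ := hR.exists_qf_eq_sum_eigenvalues x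
  rw [hqf, ← hy, lamMax, dif_pos hR, Finset.mul_sum]
  exact Finset.sum_le_sum fun i _ => mul_le_mul_of_nonneg_right
    (le_ciSup (Set.finite_range _).bddAbove i) (sq_nonneg _)

theorem lamMax_nonneg (hR : R.PosSemidef) : 0 ≤ lamMax R := by
  rw [lamMax, dif_pos hR.isHermitian]
  exact Real.iSup_nonneg hR.eigenvalues_nonneg

variable [NeZero p]

theorem lamMin_pos (hR : R.PosDef) : 0 < lamMin R := by
  rw [lamMin, dif_pos hR.isHermitian]
  obtain ⟨i, hi⟩ := exists_eq_ciInf_of_finite (f := hR.isHermitian.eigenvalues)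
  exact hi ▸ hR.eigenvalues_pos i

theorem lamMin_le_lamMax_of_qf_le (hR : R.IsHermitian) (hS : S.IsHermitian)
    (hRS : ∀ x, qf R x ≤ qf S x) : lamMin R ≤ lamMax S := by
  set e : Fin p → ℝ := Pi.single 0 1
  have he : e ⬝ᵥ e = 1 := by simp [e]
  simpa [he] using (lamMin_mul_dotProduct_le_qf hR e).trans
    ((hRS e).trans (qf_le_lamMax_mul_dotProduct hS e))

theorem lamMin_le_lamMax (hR : R.IsHermitian) : lamMin R ≤ lamMax R :=
  lamMin_le_lamMax_of_qf_le hR hR fun _ => le_rfl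

theorem lamMax_pos (hR : R.PosDef) : 0 < lamMax R :=
  (lamMin_pos hR).trans_le (lamMin_le_lamMax hR.isHermitian)

theorem qf_le_lamMax_div_lamMin_mul (hS : S.PosSemidef) (hR : R.PosDef) (x : Fin p → ℝ) :
    qf S x ≤ lamMax S / lamMin R * qf R x := by
  have hmin := lamMin_pos hR
  calc qf S x ≤ lamMax S / lamMin R * (lamMin R * (x ⬝ᵥ x)) := by
        rw [← mul_assoc, div_mul_cancel₀ _ hmin.ne']
        exact qf_le_lamMax_mul_dotProduct hS.isHermitian x
    _ ≤ lamMax S / lamMin R * qf R x :=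
        mul_le_mul_of_nonneg_left (lamMin_mul_dotProduct_le_qf hR.isHermitian x)
          (div_nonneg (lamMax_nonneg hS) hmin.le)

end Rayleigh

section Lyapunov
variable {p : ℕ} {Abar Pb Qb : Matrix (Fin p) (Fin p) ℝ}

theorem qf_mulVec_of_lyapunov (hLyap : Abarᵀ * Pb * Abar - Pb = -Qb) (z : Fin p → ℝ) :
    qf Pb (Abar *ᵥ z) = qf Pb z - qf Qb z := by
  have h : Abarᵀ * Pb * Abar = Pb - Qb := by
    linear_combination (norm := module) hLyap
  rw [← qf_transpose_mul_mul, h, qf_sub]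

theorem qf_mulVec_le_of_lyapunov (hQb : Qb.PosSemidef)
    (hLyap : Abarᵀ * Pb * Abar - Pb = -Qb) (z : Fin p → ℝ) :
    qf Pb (Abar *ᵥ z) ≤ qf Pb z := by
  linarith [qf_mulVec_of_lyapunov hLyap z, qf_nonneg hQb z]

variable [NeZero p]

theorem lamParam_nonneg (hQb : Qb.PosDef) (hPb : Pb.PosDef)
    (hLyap : Abarᵀ * Pb * Abar - Pb = -Qb) : 0 ≤ lamParam Qb Pb := by
  have hQP : lamMin Qb ≤ lamMax Pb :=
    lamMin_le_lamMax_of_qf_le hQb.isHermitian hPb.isHermitian fun z => by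
      linarith [qf_mulVec_of_lyapunov hLyap z, qf_nonneg hPb.posSemidef (Abar *ᵥ z)]
  rw [lamParam, sub_nonneg]
  exact div_le_one_of_le₀ hQP ((lamMin_pos hQb).le.trans hQP)

theorem lamParam_lt_one (hQb : Qb.PosDef) (hPb : Pb.PosDef) : lamParam Qb Pb < 1 := by
  rw [lamParam, sub_lt_self_iff]
  exact div_pos (lamMin_pos hQb) (lamMax_pos hPb)

theorem qf_mulVec_le_lamParam_mul (hQb : Qb.PosDef) (hPb : Pb.PosDef)
    (hLyap : Abarᵀ * Pb * Abar - Pb = -Qb) (z : Fin p → ℝ) :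
    qf Pb (Abar *ᵥ z) ≤ lamParam Qb Pb * qf Pb z := by
  have hmax := lamMax_pos hPb
  have hQ : lamMin Qb / lamMax Pb * qf Pb z ≤ qf Qb z :=
    calc lamMin Qb / lamMax Pb * qf Pb z
        ≤ lamMin Qb / lamMax Pb * (lamMax Pb * (z ⬝ᵥ z)) :=
          mul_le_mul_of_nonneg_left (qf_le_lamMax_mul_dotProduct hPb.isHermitian z)
            (div_nonneg (lamMin_pos hQb).le hmax.le)
      _ = lamMin Qb * (z ⬝ᵥ z) := by rw [← mul_assoc, div_mul_cancel₀ _ hmax.ne']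
      _ ≤ qf Qb z := lamMin_mul_dotProduct_le_qf hQb.isHermitian z
  rw [qf_mulVec_of_lyapunov hLyap, lamParam]
  linarith

theorem qf_pow_mulVec_le_lamParam_pow_mul (hQb : Qb.PosDef) (hPb : Pb.PosDef)
    (hLyap : Abarᵀ * Pb * Abar - Pb = -Qb) (z : Fin p → ℝ) (τ : ℕ) :
    qf Pb (Abar ^ τ *ᵥ z) ≤ lamParam Qb Pb ^ τ * qf Pb z := by
  induction τ with
  | zero => simp
  | succ τ ih =>
    rw [pow_succ', ← mulVec_mulVec, pow_succ', mul_assoc]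
    exact (qf_mulVec_le_lamParam_mul hQb hPb hLyap _).trans
      (mul_le_mul_of_nonneg_left ih (lamParam_nonneg hQb hPb hLyap))

end Lyapunov

section Trajectory
variable {n m : ℕ} {A : Matrix (Fin n) (Fin n) ℝ} {B : Matrix (Fin n) (Fin m) ℝ}
  {P : Matrix (Fin n) (Fin n) ℝ} {Q : Matrix (Fin m) (Fin m) ℝ}
  {X0 : Set (Fin n → ℝ)} {U : Set (Fin m → ℝ)} {x : Fin n → ℝ} {u v : ℕ → Fin m → ℝ}

theorem traj_congr {k : ℕ} (h : ∀ s < k, u s = v s) : traj A B x u k = traj A B x v k := by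
  induction k with
  | zero => rfl
  | succ k ih => simp only [traj, ih fun s hs => h s (by omega), h k k.lt_succ_self]

theorem traj_succ' (s : ℕ) :
    traj A B x u (s + 1) = traj A B (A *ᵥ x + B *ᵥ u 0) (fun s => u (s + 1)) s := by
  induction s with
  | zero => rfl
  | succ s ih => rw [traj, ih]; rfl

theorem cost_congr {k : ℕ} (h : ∀ s < k, u s = v s) :
    cost A B P Q k x u = cost A B P Q k x v := by
  have htraj : ∀ s ≤ k, traj A B x u s = traj A B x v s := fun s hs =>
    traj_congr fun s' hs' => h s' (by omega)
  rw [cost, cost, htraj k le_rfl]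
  congr 1
  exact Finset.sum_congr rfl fun s hs => by
    rw [Finset.mem_range] at hs
    rw [htraj s hs.le, h s hs]

theorem cost_succ (k : ℕ) :
    cost A B P Q (k + 1) x u =
      cost A B P Q k x u + qf Q (u k) + qf P (traj A B x u (k + 1)) := by
  rw [cost, cost, Finset.sum_range_succ]
  ring

theorem cost_succ' (k : ℕ) :
    cost A B P Q (k + 1) x u =
      qf P x + qf Q (u 0) + cost A B P Q k (A *ᵥ x + B *ᵥ u 0) (fun s => u (s + 1)) := by
  simp only [cost, Finset.sum_range_succ', traj_succ']
  rw [traj]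
  ring

theorem cost_nonneg (hP : P.PosSemidef) (hQ : Q.PosSemidef) (k : ℕ) :
    0 ≤ cost A B P Q k x u :=
  add_nonneg (Finset.sum_nonneg fun _ _ => add_nonneg (qf_nonneg hP _) (qf_nonneg hQ _))
    (qf_nonneg hP _)

theorem cost_le_sum_range_succ (hQ : Q.PosSemidef) (k : ℕ) :
    cost A B P Q k x u ≤
      ∑ τ ∈ Finset.range (k + 1), (qf P (traj A B x u τ) + qf Q (u τ)) := by
  rw [cost, Finset.sum_range_succ]
  linarith [qf_nonneg hQ (u k)]

theorem Vopt_le_cost (hP : P.PosSemidef) (hQ : Q.PosSemidef) {k : ℕ}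
    (hu : Feasible A B X0 U k x u) : Vopt A B P Q X0 U k x ≤ cost A B P Q k x u :=
  csInf_le ⟨0, by rintro _ ⟨v, -, rfl⟩; exact cost_nonneg hP hQ k⟩ ⟨u, hu, rfl⟩

theorem feasible_succ_iff {k : ℕ} :
    Feasible A B X0 U (k + 1) x u ↔
      u 0 ∈ U ∧ A *ᵥ x + B *ᵥ u 0 ∈ X0 ∧
        Feasible A B X0 U k (A *ᵥ x + B *ᵥ u 0) (fun s => u (s + 1)) := by
  simp only [Feasible, Nat.forall_lt_succ_left', ← traj_succ']
  exact ⟨fun ⟨⟨h0, hU⟩, ⟨h1, hX⟩⟩ => ⟨h0, h1, hU, hX⟩,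
    fun ⟨h0, h1, hU, hX⟩ => ⟨⟨h0, hU⟩, ⟨h1, hX⟩⟩⟩

theorem traj_mem_of_feasible (hx : x ∈ X0) {N : ℕ} (hu : Feasible A B X0 U N x u) {τ : ℕ}
    (hτ : τ ≤ N) : traj A B x u τ ∈ X0 := by
  cases τ with
  | zero => exact hx
  | succ τ => exact hu.2 τ hτ

end Trajectory

def feedbackCtrl {n m : ℕ} (K : Matrix (Fin m) (Fin n) ℝ) (Abar : Matrix (Fin n) (Fin n) ℝ)
    (y : Fin n → ℝ) : ℕ → Fin m → ℝ :=
  fun τ => K *ᵥ (Abar ^ τ *ᵥ y)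

section Feedback
variable {n m : ℕ} {A : Matrix (Fin n) (Fin n) ℝ} {B : Matrix (Fin n) (Fin m) ℝ}
  {K : Matrix (Fin m) (Fin n) ℝ} {Qb Pb P : Matrix (Fin n) (Fin n) ℝ}
  {Q : Matrix (Fin m) (Fin m) ℝ}

theorem traj_feedbackCtrl (y : Fin n → ℝ) (τ : ℕ) :
    traj A B y (feedbackCtrl K (A + B * K) y) τ = (A + B * K) ^ τ *ᵥ y := by
  induction τ with
  | zero => simp [traj]
  | succ τ ih =>
    rw [traj, ih, feedbackCtrl, pow_succ', ← mulVec_mulVec, add_mulVec, ← mulVec_mulVec]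

theorem feasible_feedbackCtrl {X0 : Set (Fin n → ℝ)} {U : Set (Fin m → ℝ)}
    (hKU : ∀ z ∈ X0, K *ᵥ z ∈ U) (hinv : ∀ z ∈ X0, (A + B * K) *ᵥ z ∈ X0)
    {y : Fin n → ℝ} (hy : y ∈ X0) (k : ℕ) :
    Feasible A B X0 U k y (feedbackCtrl K (A + B * K) y) := by
  have hpow : ∀ τ : ℕ, (A + B * K) ^ τ *ᵥ y ∈ X0 := fun τ => by
    induction τ with
    | zero => simpa using hy
    | succ τ ih => simpa [pow_succ', ← mulVec_mulVec] using hinv _ ih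
  exact ⟨fun τ _ => hKU _ (hpow τ), fun τ _ => traj_feedbackCtrl (A := A) y (τ + 1) ▸ hpow _⟩

variable [NeZero n]

theorem phi_eq_mul_geom_sum (hQb : Qb.PosDef) (hPb : Pb.PosDef) (k : ℕ) :
    phi Qb Pb P Q K k = lamMax Pb * lamMax (P + Kᵀ * Q * K) / lamMin Pb *
      ∑ i ∈ Finset.range (k + 1), lamParam Qb Pb ^ i := by
  rw [phi, geom_sum_eq (lamParam_lt_one hQb hPb).ne, ← neg_div_neg_eq (_ - 1), neg_sub, neg_sub]

theorem lamMin_le_phi (hQb : Qb.PosDef) (hPb : Pb.PosDef)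
    (hLyap : (A + B * K)ᵀ * Pb * (A + B * K) - Pb = -Qb) (hP : P.PosDef) (hQ : Q.PosSemidef)
    (k : ℕ) : lamMin P ≤ phi Qb Pb P Q K k := by
  have hS : (P + Kᵀ * Q * K).PosSemidef := hP.posSemidef.add (hQ.transpose_mul_mul K)
  have hPS : lamMin P ≤ lamMax (P + Kᵀ * Q * K) :=
    lamMin_le_lamMax_of_qf_le hP.isHermitian hS.isHermitian fun z => by
      rw [qf_add]; linarith [qf_nonneg (hQ.transpose_mul_mul K) z]
  have hcond : 1 ≤ lamMax Pb / lamMin Pb :=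
    (one_le_div (lamMin_pos hPb)).mpr (lamMin_le_lamMax hPb.isHermitian)
  have hgeom : 1 ≤ ∑ i ∈ Finset.range (k + 1), lamParam Qb Pb ^ i := by
    simpa using Finset.single_le_sum (fun i _ => pow_nonneg (lamParam_nonneg hQb hPb hLyap) i)
      (Finset.mem_range.mpr k.succ_pos)
  rw [phi_eq_mul_geom_sum hQb hPb, mul_comm (lamMax Pb), mul_div_assoc]
  calc lamMin P ≤ lamMax (P + Kᵀ * Q * K) := hPS
    _ ≤ lamMax (P + Kᵀ * Q * K) * (lamMax Pb / lamMin Pb) :=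
      le_mul_of_one_le_right (lamMax_nonneg hS) hcond
    _ ≤ _ := le_mul_of_one_le_right (mul_nonneg (lamMax_nonneg hS) (by linarith)) hgeom

theorem phi_pos (hQb : Qb.PosDef) (hPb : Pb.PosDef)
    (hLyap : (A + B * K)ᵀ * Pb * (A + B * K) - Pb = -Qb) (hP : P.PosDef) (hQ : Q.PosSemidef)
    (k : ℕ) : 0 < phi Qb Pb P Q K k :=
  (lamMin_pos hP).trans_le (lamMin_le_phi hQb hPb hLyap hP hQ k)

theorem cost_feedbackCtrl_le (hQb : Qb.PosDef) (hPb : Pb.PosDef)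
    (hLyap : (A + B * K)ᵀ * Pb * (A + B * K) - Pb = -Qb) (hP : P.PosSemidef)
    (hQ : Q.PosSemidef) (y : Fin n → ℝ) (k : ℕ) :
    cost A B P Q k y (feedbackCtrl K (A + B * K) y) ≤ phi Qb Pb P Q K k * (y ⬝ᵥ y) := by
  set S := P + Kᵀ * Q * K
  have hS : S.PosSemidef := hP.add (hQ.transpose_mul_mul K)
  have hstage : ∀ τ, qf P (traj A B y (feedbackCtrl K (A + B * K) y) τ) +
      qf Q (feedbackCtrl K (A + B * K) y τ) ≤
        lamMax Pb * lamMax S / lamMin Pb * lamParam Qb Pb ^ τ * (y ⬝ᵥ y) := fun τ => by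
    rw [traj_feedbackCtrl, feedbackCtrl, ← qf_transpose_mul_mul Q K, ← qf_add]
    calc qf S ((A + B * K) ^ τ *ᵥ y)
        ≤ lamMax S / lamMin Pb * qf Pb ((A + B * K) ^ τ *ᵥ y) :=
          qf_le_lamMax_div_lamMin_mul hS hPb _
      _ ≤ lamMax S / lamMin Pb * (lamParam Qb Pb ^ τ * (lamMax Pb * (y ⬝ᵥ y))) :=
          mul_le_mul_of_nonneg_left
            ((qf_pow_mulVec_le_lamParam_pow_mul hQb hPb hLyap y τ).trans
              (mul_le_mul_of_nonneg_left (qf_le_lamMax_mul_dotProduct hPb.isHermitian y)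
                (pow_nonneg (lamParam_nonneg hQb hPb hLyap) τ)))
            (div_nonneg (lamMax_nonneg hS) (lamMin_pos hPb).le)
      _ = lamMax Pb * lamMax S / lamMin Pb * lamParam Qb Pb ^ τ * (y ⬝ᵥ y) := by ring
  calc cost A B P Q k y (feedbackCtrl K (A + B * K) y)
      ≤ ∑ τ ∈ Finset.range (k + 1), (qf P (traj A B y (feedbackCtrl K (A + B * K) y) τ) +
          qf Q (feedbackCtrl K (A + B * K) y τ)) := cost_le_sum_range_succ hQ k
    _ ≤ ∑ τ ∈ Finset.range (k + 1),
          lamMax Pb * lamMax S / lamMin Pb * lamParam Qb Pb ^ τ * (y ⬝ᵥ y) :=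
        Finset.sum_le_sum fun τ _ => hstage τ
    _ = phi Qb Pb P Q K k * (y ⬝ᵥ y) := by
        rw [phi_eq_mul_geom_sum hQb hPb, Finset.mul_sum, Finset.sum_mul]

theorem Vopt_le_phi_mul (hQb : Qb.PosDef) (hPb : Pb.PosDef)
    (hLyap : (A + B * K)ᵀ * Pb * (A + B * K) - Pb = -Qb) (hP : P.PosSemidef)
    (hQ : Q.PosSemidef) {X0 : Set (Fin n → ℝ)} {U : Set (Fin m → ℝ)}
    (hKU : ∀ z ∈ X0, K *ᵥ z ∈ U) (hinv : ∀ z ∈ X0, (A + B * K) *ᵥ z ∈ X0)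
    {y : Fin n → ℝ} (hy : y ∈ X0) (k : ℕ) :
    Vopt A B P Q X0 U k y ≤ phi Qb Pb P Q K k * (y ⬝ᵥ y) :=
  (Vopt_le_cost hP hQ (feasible_feedbackCtrl hKU hinv hy k)).trans
    (cost_feedbackCtrl_le hQb hPb hLyap hP hQ y k)

end Feedback

def IsOptimal {n m : ℕ} (A : Matrix (Fin n) (Fin n) ℝ) (B : Matrix (Fin n) (Fin m) ℝ)
    (P : Matrix (Fin n) (Fin n) ℝ) (Q : Matrix (Fin m) (Fin m) ℝ)
    (X0 : Set (Fin n → ℝ)) (U : Set (Fin m → ℝ)) (N : ℕ) (x : Fin n → ℝ)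
    (u : ℕ → Fin m → ℝ) : Prop :=
  Feasible A B X0 U N x u ∧ cost A B P Q N x u = Vopt A B P Q X0 U N x

section Optimality
variable {n m : ℕ} {A : Matrix (Fin n) (Fin n) ℝ} {B : Matrix (Fin n) (Fin m) ℝ}
  {K : Matrix (Fin m) (Fin n) ℝ} {Qb Pb P : Matrix (Fin n) (Fin n) ℝ}
  {Q : Matrix (Fin m) (Fin m) ℝ} {X0 : Set (Fin n → ℝ)} {U : Set (Fin m → ℝ)}
  {x : Fin n → ℝ} {u : ℕ → Fin m → ℝ}

theorem IsOptimal.tail (hP : P.PosSemidef) (hQ : Q.PosSemidef) {k : ℕ}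
    (hu : IsOptimal A B P Q X0 U (k + 1) x u) :
    IsOptimal A B P Q X0 U k (A *ᵥ x + B *ᵥ u 0) (fun s => u (s + 1)) := by
  obtain ⟨hu0, hx1, htail⟩ := feasible_succ_iff.mp hu.1
  refine ⟨htail, le_antisymm (le_csInf ⟨_, _, htail, rfl⟩ ?_) (Vopt_le_cost hP hQ htail)⟩
  rintro _ ⟨v, hv, rfl⟩
  set w : ℕ → Fin m → ℝ := fun | 0 => u 0 | s + 1 => v s
  have hcons : Feasible A B X0 U (k + 1) x w := feasible_succ_iff.mpr ⟨hu0, hx1, hv⟩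
  have h := Vopt_le_cost hP hQ hcons
  rw [← hu.2, cost_succ', cost_succ'] at h
  exact le_of_add_le_add_left h

theorem Vopt_succ_le (hP : P.PosSemidef) (hQ : Q.PosSemidef) (hKU : ∀ z ∈ X0, K *ᵥ z ∈ U)
    (hinv : ∀ z ∈ X0, (A + B * K) *ᵥ z ∈ X0) (hx : x ∈ X0) {N : ℕ}
    (hu : IsOptimal A B P Q X0 U N x u) :
    Vopt A B P Q X0 U (N + 1) x ≤
      Vopt A B P Q X0 U N x + qf (Kᵀ * Q * K + (A + B * K)ᵀ * P * (A + B * K)) (traj A B x u N) := by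
  set xN := traj A B x u N
  have hxN : xN ∈ X0 := traj_mem_of_feasible hx hu.1 le_rfl
  set w : ℕ → Fin m → ℝ := fun s => if s < N then u s else K *ᵥ xN
  have hwu : ∀ s < N, w s = u s := fun s hs => if_pos hs
  have hwN : w N = K *ᵥ xN := if_neg N.lt_irrefl
  have htraj : ∀ s ≤ N, traj A B x w s = traj A B x u s := fun s hs =>
    traj_congr fun s' hs' => hwu s' (by omega)
  have htrajN : traj A B x w (N + 1) = (A + B * K) *ᵥ xN := by
    rw [traj, htraj N le_rfl, hwN, add_mulVec, mulVec_mulVec]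
  have hw : Feasible A B X0 U (N + 1) x w := by
    refine ⟨fun τ hτ => ?_, fun τ hτ => ?_⟩ <;> rcases Nat.lt_succ_iff_lt_or_eq.mp hτ with h | rfl
    · exact hwu τ h ▸ hu.1.1 τ h
    · exact hwN ▸ hKU _ hxN
    · exact htraj (τ + 1) h ▸ hu.1.2 τ h
    · exact htrajN ▸ hinv _ hxN
  calc Vopt A B P Q X0 U (N + 1) x ≤ cost A B P Q (N + 1) x w := Vopt_le_cost hP hQ hw
    _ = _ := by
      rw [cost_succ, cost_congr hwu, hu.2, hwN, htrajN, qf_add, qf_transpose_mul_mul,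
        qf_transpose_mul_mul, add_assoc]

variable [NeZero n]

theorem Vopt_tail_le_mul (hQb : Qb.PosDef) (hPb : Pb.PosDef)
    (hLyap : (A + B * K)ᵀ * Pb * (A + B * K) - Pb = -Qb) (hP : P.PosDef) (hQ : Q.PosSemidef)
    (hKU : ∀ z ∈ X0, K *ᵥ z ∈ U) (hinv : ∀ z ∈ X0, (A + B * K) *ᵥ z ∈ X0) (hx : x ∈ X0)
    {k : ℕ} (hu : IsOptimal A B P Q X0 U (k + 1) x u) :
    Vopt A B P Q X0 U k (A *ᵥ x + B *ᵥ u 0) ≤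
      (1 - lamMin P / phi Qb Pb P Q K (k + 1)) * Vopt A B P Q X0 U (k + 1) x := by
  have hsplit : Vopt A B P Q X0 U (k + 1) x =
      qf P x + qf Q (u 0) + Vopt A B P Q X0 U k (A *ᵥ x + B *ᵥ u 0) := by
    rw [← hu.2, cost_succ', (hu.tail hP.posSemidef hQ).2]
  have hphi := phi_pos hQb hPb hLyap hP hQ (k + 1)
  have hdecr : lamMin P / phi Qb Pb P Q K (k + 1) * Vopt A B P Q X0 U (k + 1) x ≤ qf P x :=
    calc lamMin P / phi Qb Pb P Q K (k + 1) * Vopt A B P Q X0 U (k + 1) x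
        ≤ lamMin P / phi Qb Pb P Q K (k + 1) * (phi Qb Pb P Q K (k + 1) * (x ⬝ᵥ x)) :=
          mul_le_mul_of_nonneg_left
            (Vopt_le_phi_mul hQb hPb hLyap hP.posSemidef hQ hKU hinv hx (k + 1))
            (div_nonneg (lamMin_pos hP).le hphi.le)
      _ = lamMin P * (x ⬝ᵥ x) := by rw [← mul_assoc, div_mul_cancel₀ _ hphi.ne']
      _ ≤ qf P x := lamMin_mul_dotProduct_le_qf hP.isHermitian x
  rw [sub_mul, one_mul]
  linarith [qf_nonneg hQ (u 0)]

theorem qf_traj_le_prod_mul_Vopt (hQb : Qb.PosDef) (hPb : Pb.PosDef)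
    (hLyap : (A + B * K)ᵀ * Pb * (A + B * K) - Pb = -Qb) (hP : P.PosDef) (hQ : Q.PosSemidef)
    (hKU : ∀ z ∈ X0, K *ᵥ z ∈ U) (hinv : ∀ z ∈ X0, (A + B * K) *ᵥ z ∈ X0) {N : ℕ} :
    ∀ {x u}, x ∈ X0 → IsOptimal A B P Q X0 U N x u →
      qf P (traj A B x u N) ≤
        (∏ κ ∈ Finset.range N, (1 - lamMin P / phi Qb Pb P Q K (κ + 1))) *
          Vopt A B P Q X0 U N x := by
  induction N with
  | zero =>
    intro x u _ hu
    simp [← hu.2, cost, traj]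
  | succ N ih =>
    intro x u hx hu
    have hfactor : ∀ κ ∈ Finset.range N, 0 ≤ 1 - lamMin P / phi Qb Pb P Q K (κ + 1) :=
      fun κ _ => sub_nonneg.mpr ((div_le_one (phi_pos hQb hPb hLyap hP hQ _)).mpr
        (lamMin_le_phi hQb hPb hLyap hP hQ _))
    calc qf P (traj A B x u (N + 1))
        = qf P (traj A B (A *ᵥ x + B *ᵥ u 0) (fun s => u (s + 1)) N) := by rw [traj_succ']
      _ ≤ (∏ κ ∈ Finset.range N, (1 - lamMin P / phi Qb Pb P Q K (κ + 1))) *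
            Vopt A B P Q X0 U N (A *ᵥ x + B *ᵥ u 0) :=
          ih (feasible_succ_iff.mp hu.1).2.1 (hu.tail hP.posSemidef hQ)
      _ ≤ (∏ κ ∈ Finset.range N, (1 - lamMin P / phi Qb Pb P Q K (κ + 1))) *
            ((1 - lamMin P / phi Qb Pb P Q K (N + 1)) * Vopt A B P Q X0 U (N + 1) x) :=
          mul_le_mul_of_nonneg_left (Vopt_tail_le_mul hQb hPb hLyap hP hQ hKU hinv hx hu)
            (Finset.prod_nonneg hfactor)
      _ = _ := by rw [Finset.prod_range_succ, mul_assoc]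

end Optimality

theorem stmt9_general {n m : ℕ}
    (A : Matrix (Fin n) (Fin n) ℝ) (B : Matrix (Fin n) (Fin m) ℝ)
    (K : Matrix (Fin m) (Fin n) ℝ) (Qb Pb : Matrix (Fin n) (Fin n) ℝ)
    (hQb : Qb.PosDef) (hPb : Pb.PosDef)
    (hLyap : (A + B * K)ᵀ * Pb * (A + B * K) - Pb = -Qb)
    (c : ℝ)
    (X0 : Set (Fin n → ℝ)) (hX0 : X0 = {x : Fin n → ℝ | qf Pb x ≤ c})
    (X : Set (Fin n → ℝ)) (U : Set (Fin m → ℝ))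
    (hX0X : X0 ⊆ X) (hKU : ∀ x ∈ X, K *ᵥ x ∈ U)
    (P : Matrix (Fin n) (Fin n) ℝ) (Q : Matrix (Fin m) (Fin m) ℝ)
    (hP : P.PosDef) (hQ : Q.PosDef)
    (N : ℕ) (x : Fin n → ℝ) (hx : x ∈ X0)
    (hattain : ∃ u : ℕ → Fin m → ℝ,
      Feasible A B X0 U N x u ∧ cost A B P Q N x u = Vopt A B P Q X0 U N x) :
    Vopt A B P Q X0 U (N + 1) x - Vopt A B P Q X0 U N x
        ≤ alphaC Qb Pb P (A + B * K) Q K N * Vopt A B P Q X0 U N x ∧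
      Vopt A B P Q X0 U (N + 1) x
        ≤ (1 + alphaC Qb Pb P (A + B * K) Q K N) * Vopt A B P Q X0 U N x := by
  obtain ⟨u, hu⟩ := hattain
  have hKX0 : ∀ z ∈ X0, K *ᵥ z ∈ U := fun z hz => hKU z (hX0X hz)
  have hinv : ∀ z ∈ X0, (A + B * K) *ᵥ z ∈ X0 := fun z hz => by
    rw [hX0] at hz ⊢
    exact (qf_mulVec_le_of_lyapunov hQb.posSemidef hLyap z).trans hz
  have hstep := Vopt_succ_le hP.posSemidef hQ.posSemidef hKX0 hinv hx hu
  suffices hstage : qf (Kᵀ * Q * K + (A + B * K)ᵀ * P * (A + B * K)) (traj A B x u N) ≤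
      alphaC Qb Pb P (A + B * K) Q K N * Vopt A B P Q X0 U N x by
    constructor <;> linarith
  rcases Nat.eq_zero_or_pos n with rfl | hn
  · -- in dimension 0, `lamMin P = 0`, hence `psiC = 0` and `alphaC = 0` (division by zero)
    simp [qf, alphaC, psiC, lamMin]
  have : NeZero n := ⟨hn.ne'⟩
  have hM : (Kᵀ * Q * K + (A + B * K)ᵀ * P * (A + B * K)).PosSemidef :=
    (hQ.posSemidef.transpose_mul_mul K).add (hP.posSemidef.transpose_mul_mul _)
  calc qf (Kᵀ * Q * K + (A + B * K)ᵀ * P * (A + B * K)) (traj A B x u N)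
      ≤ psiC P (A + B * K) Q K * qf P (traj A B x u N) := qf_le_lamMax_div_lamMin_mul hM hP _
    _ ≤ psiC P (A + B * K) Q K * ((∏ κ ∈ Finset.range N,
          (1 - lamMin P / phi Qb Pb P Q K (κ + 1))) * Vopt A B P Q X0 U N x) :=
        mul_le_mul_of_nonneg_left
          (qf_traj_le_prod_mul_Vopt hQb hPb hLyap hP hQ.posSemidef hKX0 hinv hx hu)
          (div_nonneg (lamMax_nonneg hM) (lamMin_pos hP).le)
    _ = alphaC Qb Pb P (A + B * K) Q K N * Vopt A B P Q X0 U N x := by rw [alphaC, mul_assoc]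

/-- The diminishing ratios of V_N in N: if the `N`-QP at `x ∈ X₀` (`N ≥ 1`)
attains its infimum, then `V_{N+1}(x) − V_N(x) ≤ α_N·V_N(x)`, i.e.
`V_{N+1}(x) ≤ (1 + α_N)·V_N(x)`. -/
theorem stmt9 {n m : ℕ}
    (A : Matrix (Fin n) (Fin n) ℝ) (B : Matrix (Fin n) (Fin m) ℝ)
    (K : Matrix (Fin m) (Fin n) ℝ) (Qb Pb : Matrix (Fin n) (Fin n) ℝ)
    (hQb : Qb.PosDef) (hPb : Pb.PosDef)
    (hLyap : (A + B * K)ᵀ * Pb * (A + B * K) - Pb = -Qb)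
    (c : ℝ) (hc : 0 < c)
    (X0 : Set (Fin n → ℝ)) (hX0 : X0 = {x : Fin n → ℝ | qf Pb x ≤ c})
    (X : Set (Fin n → ℝ)) (U : Set (Fin m → ℝ))
    (hX : Convex ℝ X) (hU : Convex ℝ U)
    (h0X : (0 : Fin n → ℝ) ∈ X) (h0U : (0 : Fin m → ℝ) ∈ U)
    (hX0X : X0 ⊆ X) (hKU : ∀ x ∈ X, K *ᵥ x ∈ U)
    (P : Matrix (Fin n) (Fin n) ℝ) (Q : Matrix (Fin m) (Fin m) ℝ)
    (hP : P.PosDef) (hQ : Q.PosDef)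
    (N : ℕ) (hN : 1 ≤ N) (x : Fin n → ℝ) (hx : x ∈ X0)
    (hattain : ∃ u : ℕ → Fin m → ℝ,
      Feasible A B X0 U N x u ∧ cost A B P Q N x u = Vopt A B P Q X0 U N x) :
    Vopt A B P Q X0 U (N + 1) x - Vopt A B P Q X0 U N x
        ≤ alphaC Qb Pb P (A + B * K) Q K N * Vopt A B P Q X0 U N x ∧
      Vopt A B P Q X0 U (N + 1) x
        ≤ (1 + alphaC Qb Pb P (A + B * K) Q K N) * Vopt A B P Q X0 U N x :=
  stmt9_general A B K Qb Pb hQb hPb hLyap c X0 hX0 X U hX0X hKU P Q hP hQ N x hx hattain
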